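/- The common product of sin(ωx) and cos(ωx) over one full period [0, T], with ω = 2π/T, is zero: ∫₀ᵀ mproduct(sin(ωx), cos(ωx)) dx = 0. -/

import Mathlib

/-! The reflection `x ↦ T - x` of `[0, T]` maps `ωx` to `2π - ωx`, which negates `sin` and fixes
`cos`. Since `mproduct` is odd in its first argument, the integrand changes sign under a
measure-preserving reflection of the interval, so its integral equals its own negative. -/

noncomputable def msign (a : ℝ) : ℝ := if 0 ≤ a then 1 else -1

noncomputable def mproduct (a b : ℝ) : ℝ :=
  msign a * msign b * min (msign a * a) (msign b * b)

lemma msign_mul_self (a : ℝ) : msign a * a = |a| := by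
  unfold msign
  split_ifs with h
  · rw [one_mul, abs_of_nonneg h]
  · rw [neg_one_mul, abs_of_neg (not_le.1 h)]

lemma msign_neg {a : ℝ} (ha : a ≠ 0) : msign (-a) = -msign a := by
  rcases ha.lt_or_gt with h | h
  · simp [msign, h.le, not_le.2 h]
  · simp [msign, h.le, not_le.2 (neg_neg_iff_pos.2 h)]

lemma mproduct_eq (a b : ℝ) : mproduct a b = msign a * msign b * min |a| |b| := by
  rw [mproduct, msign_mul_self, msign_mul_self]

@[simp]
lemma mproduct_zero_left (b : ℝ) : mproduct 0 b = 0 := by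
  simp [mproduct_eq, abs_nonneg]

lemma mproduct_neg_left (a b : ℝ) : mproduct (-a) b = -mproduct a b := by
  rcases eq_or_ne a 0 with rfl | ha
  · simp
  · rw [mproduct_eq, mproduct_eq, msign_neg ha, abs_neg]
    ring

lemma intervalIntegral.integral_eq_zero_of_comp_add_sub {E : Type*} [NormedAddCommGroup E]
    [NormedSpace ℝ E] {f : ℝ → E} {a b : ℝ} (hf : ∀ x, f (a + b - x) = -f x) :
    ∫ x in a..b, f x = 0 := by
  have hreflect : ∫ x in a..b, f (a + b - x) = ∫ x in a..b, f x := by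
    rw [intervalIntegral.integral_comp_sub_left, add_sub_cancel_right, add_sub_cancel_left]
  simp_rw [hf, intervalIntegral.integral_neg, neg_eq_iff_add_eq_zero, ← two_smul ℝ] at hreflect
  exact (smul_eq_zero.1 hreflect).resolve_left two_ne_zero

open Real in
lemma mproduct_sin_cos_two_pi_sub (y : ℝ) :
    mproduct (sin (2 * π - y)) (cos (2 * π - y)) = -mproduct (sin y) (cos y) := by
  rw [sin_two_pi_sub, cos_two_pi_sub, mproduct_neg_left]

open Real in
theorem common_product_sin_cos (T : ℝ) (hT : 0 < T) (ω : ℝ) (hω : ω = 2 * π / T) :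
    (∫ x in (0:ℝ)..T, mproduct (sin (ω * x)) (cos (ω * x))) = 0 := by
  have hωT : ω * T = 2 * π := by rw [hω, div_mul_cancel₀ _ hT.ne']
  refine intervalIntegral.integral_eq_zero_of_comp_add_sub fun x => ?_
  rw [zero_add, mul_sub, hωT, mproduct_sin_cos_two_pi_sub]
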